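/- Let $f \in \mathbb{R}^n$ with $f_i \geq 0$, let $p > 0$, and let $e_1, \ldots, e_n$ be independent exponential random variables with rate 1. Then the random variable $\max_{i \in [n]} f_i / e_i^{1/p}$ has the same distribution as $\|f\|_p / e^{1/p}$, where $e$ is an exponential random variable with rate 1 and $\|f\|_p = (\sum_i f_i^p)^{1/p}$. -/

import Mathlib

open MeasureTheory ProbabilityTheory Real Filter Topology

lemma tail_prob {Ω : Type*} [MeasureSpace Ω] [IsProbabilityMeasure (ℙ : Measure Ω)]
    (e : Ω → ℝ) (hmeas : Measurable e) (hpos : ∀ ω, 0 < e ω)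
    (hexp : ∀ t : ℝ, 0 ≤ t → ℙ {ω | e ω ≤ t} = ENNReal.ofReal (1 - Real.exp (-t)))
    (s : ℝ) (hs : 0 ≤ s) : ℙ {ω | s ≤ e ω} = ENNReal.ofReal (Real.exp (-s)) := by
  set a : ℕ → ℝ := fun n => max 0 (s - 1 / (n + 1)) with ha
  have ha0 : ∀ n, 0 ≤ a n := fun n => le_max_left _ _
  set A : ℕ → Set Ω := fun n => {ω | e ω ≤ a n}ᶜ with hA
  have hmA : ∀ n, MeasurableSet (A n) := fun n => (measurableSet_le hmeas measurable_const).compl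
  have hPA : ∀ n, ℙ (A n) = ENNReal.ofReal (Real.exp (-(a n))) := by
    intro n
    rw [prob_compl_eq_one_sub (measurableSet_le hmeas measurable_const),
      hexp _ (ha0 n), ENNReal.ofReal_sub _ (Real.exp_pos _).le, ENNReal.ofReal_one,
      ENNReal.sub_sub_cancel ENNReal.one_ne_top]
    exact ENNReal.ofReal_le_one.2 (Real.exp_le_one_iff.2 (neg_nonpos.2 (ha0 n)))
  have hamono : Monotone a := by
    intro m k hmk
    apply max_le_max le_rfl
    have hcast : (m : ℝ) ≤ k := Nat.cast_le.2 hmk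
    have : (1 : ℝ) / (k + 1) ≤ 1 / (m + 1) := by
      apply one_div_le_one_div_of_le (by positivity)
      linarith
    linarith
  have hanti : Antitone A := by
    intro m k hmk
    exact Set.compl_subset_compl.2 fun ω h => le_trans h (hamono hmk)
  have hInter : ⋂ n, A n = {ω | s ≤ e ω} := by
    ext ω
    simp only [Set.mem_iInter, hA, Set.mem_compl_iff, Set.mem_setOf_eq, not_le]
    constructor
    · intro h
      by_contra hc
      push_neg at hc
      obtain ⟨n, hn⟩ := exists_nat_gt (1 / (s - e ω))
      have hse : 0 < s - e ω := by linarith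
      have h1 : 1 / ((n : ℝ) + 1) < s - e ω := by
        rw [div_lt_iff₀ (by positivity)]
        rw [div_lt_iff₀ hse] at hn
        nlinarith
      have := h n
      have : e ω < a n := lt_of_lt_of_le (by linarith) (le_max_right _ _)
      exact absurd (h n) (not_lt.2 this.le)
    · intro h n
      apply max_lt (hpos ω)
      have : (0:ℝ) < 1 / (n + 1) := by positivity
      linarith
  have htend : Tendsto (ℙ ∘ A) atTop (𝓝 (ℙ {ω | s ≤ e ω})) := by
    rw [← hInter]
    exact tendsto_measure_iInter_atTop (fun n => (hmA n).nullMeasurableSet) hanti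
      ⟨0, measure_ne_top _ _⟩
  have hatend : Tendsto a atTop (𝓝 s) := by
    have h1 : Tendsto (fun n : ℕ => s - 1 / ((n : ℝ) + 1)) atTop (𝓝 (s - 0)) :=
      tendsto_const_nhds.sub (tendsto_one_div_add_atTop_nhds_zero_nat)
    have := (tendsto_const_nhds (x := (0:ℝ)) (f := atTop (α := ℕ))).max h1
    simpa [ha, max_eq_right hs, one_div] using this
  have htend2 : Tendsto (ℙ ∘ A) atTop (𝓝 (ENNReal.ofReal (Real.exp (-s)))) := by
    have : Tendsto (fun n => ENNReal.ofReal (Real.exp (-(a n)))) atTop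
        (𝓝 (ENNReal.ofReal (Real.exp (-s)))) := by
      exact (ENNReal.continuous_ofReal.tendsto _).comp
        ((Real.continuous_exp.tendsto _).comp hatend.neg)
    have heq : (ℙ ∘ A) = fun n => ENNReal.ofReal (Real.exp (-(a n))) := funext fun n => hPA n
    rw [heq]; exact this
  exact tendsto_nhds_unique htend htend2

/-- Max-stability of exponential random variables: the max of `f i / e i ^ (1/p)`
has the same distribution as `‖f‖_p / e^(1/p)`, stated via CDFs. -/
theorem stmt_0 {Ω : Type*} [MeasureSpace Ω] [IsProbabilityMeasure (ℙ : Measure Ω)]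
    (n : ℕ) (f : Fin n → ℝ) (hf : ∀ i, 0 ≤ f i) (p : ℝ) (hp : 0 < p)
    (e : Fin n → Ω → ℝ) (hmeas : ∀ i, Measurable (e i))
    (hpos : ∀ i ω, 0 < e i ω)
    (hindep : iIndepFun e ℙ)
    (hexp : ∀ i, ∀ t : ℝ, 0 ≤ t →
      ℙ {ω | e i ω ≤ t} = ENNReal.ofReal (1 - Real.exp (-t))) :
    ∀ t : ℝ, 0 < t →
      ℙ {ω | ∀ i, f i / (e i ω) ^ (1 / p) ≤ t}
        = ENNReal.ofReal (Real.exp (-(∑ i, f i ^ p) / t ^ p)) := by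
  intro t ht
  set s : Fin n → ℝ := fun i => f i ^ p / t ^ p with hsdef
  have htp : (0:ℝ) < t ^ p := Real.rpow_pos_of_pos ht p
  have hs0 : ∀ i, 0 ≤ s i := fun i => div_nonneg (Real.rpow_nonneg (hf i) p) htp.le
  have hkey : ∀ i ω, (f i / (e i ω) ^ (1 / p) ≤ t ↔ s i ≤ e i ω) := by
    intro i ω
    have hx : 0 < e i ω := hpos i ω
    have hxp : 0 < (e i ω) ^ (1 / p) := Real.rpow_pos_of_pos hx _
    rw [div_le_iff₀ hxp, ← Real.rpow_le_rpow_iff (hf i)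
      (mul_nonneg ht.le hxp.le) hp, Real.mul_rpow ht.le hxp.le,
      ← Real.rpow_mul hx.le]
    have h1 : 1 / p * p = 1 := by field_simp
    rw [h1, Real.rpow_one, hsdef]
    simp only [div_le_iff₀ htp]
    constructor
    · intro h; linarith [h]
    · intro h; linarith [h]
  have hset : {ω | ∀ i, f i / (e i ω) ^ (1 / p) ≤ t}
      = ⋂ i ∈ Finset.univ, e i ⁻¹' Set.Ici (s i) := by
    ext ω
    simp only [Set.mem_setOf_eq, Set.mem_iInter, Set.mem_preimage, Set.mem_Ici,
      Finset.mem_univ, Set.iInter_true]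
    exact forall_congr' fun i => hkey i ω
  rw [hset, hindep.measure_inter_preimage_eq_mul Finset.univ
    (fun i _ => measurableSet_Ici)]
  have hfac : ∀ i, ℙ (e i ⁻¹' Set.Ici (s i)) = ENNReal.ofReal (Real.exp (-(s i))) := by
    intro i
    have : e i ⁻¹' Set.Ici (s i) = {ω | s i ≤ e i ω} := rfl
    rw [this]
    exact tail_prob (e i) (hmeas i) (hpos i) (hexp i) (s i) (hs0 i)
  simp only [hfac]
  rw [← ENNReal.ofReal_prod_of_nonneg (fun i _ => (Real.exp_pos _).le),
    ← Real.exp_sum]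
  congr 1
  simp [hsdef, neg_div, Finset.sum_div]
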